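/- Let A be a commutative ring and J a finitely generated ideal of A such that the J-adic completion Â of A is Noetherian. Let M be a finitely generated A-module and M' a submodule of M. Then the Ĵ-adic topology on the completion M̂' of M' coincides with the topology induced by the filtration by the completions of M' ∩ J^n M, i.e. the filtrations (Ĵ^n M̂') and ((M' ∩ J^n M)^) define the same topology on M̂'. -/

import Mathlib

/-!
Since `J` is finitely generated, `Ĵ^n M̂` is exactly the kernel of `M̂ → M/J^n M`, and so is
the completion of `M' ∩ J^n M` inside `M̂'`. The second filtration is therefore
`(Ĵ^n M̂ ∩ M̂')`, and the Artin–Rees lemma over the Noetherian ring `Â`, applied to the finite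
`Â`-module `M̂`, makes it cofinal with `(Ĵ^n M̂')`.
-/

open AdicCompletion

variable {A : Type*} [CommRing A] (J : Ideal A)
variable {M : Type*} [AddCommGroup M] [Module A M]

/-- The completion of a submodule `N ⊆ M` with respect to the filtration `(N ∩ J^n M)`
induced from the `J`-adic topology on `M`, realized as the closure of the image of `N`
inside the `J`-adic completion `M̂ = lim M/J^n M`: it consists of those elements whose
`n`-th component lies in the image of `N` in `M/J^n M` for every `n`.  It is a module
over the completion `Â`. -/
def subCompletion (N : Submodule A M) :
    Submodule (AdicCompletion J A) (AdicCompletion J M) where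
  carrier := {x | ∀ n : ℕ,
    x.val n ∈ Submodule.map (Submodule.mkQ (J ^ n • ⊤ : Submodule A M)) N}
  zero_mem' := fun n => by
    simp only [AdicCompletion.val_zero]
    exact Submodule.zero_mem _
  add_mem' := fun {x y} hx hy n => by
    rw [AdicCompletion.val_add]
    exact Submodule.add_mem _ (hx n) (hy n)
  smul_mem' := fun c x hx n => by
    obtain ⟨k, hkN, hk⟩ := Submodule.mem_map.mp (hx n)
    obtain ⟨a, ha⟩ := Ideal.Quotient.mk_surjective (I := (J ^ n • ⊤ : Ideal A)) (c.val n)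
    have hval : (c • x).val n = c.val n • x.val n := rfl
    show (c • x).val n ∈ _
    rw [hval, ← ha, ← hk]
    exact Submodule.mem_map.mpr ⟨a • k, N.smul_mem a hkN, rfl⟩

/-- `Ĵ = Â·J`, the completion of the ideal `J`. -/
noncomputable def Jhat : Ideal (AdicCompletion J A) := J.map (algebraMap A (AdicCompletion J A))

section

variable {J}

theorem mem_Jhat_pow_smul_top_iff (hJ : J.FG) (n : ℕ) {x : AdicCompletion J M} :
    x ∈ (Jhat J) ^ n • (⊤ : Submodule (AdicCompletion J A) (AdicCompletion J M)) ↔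
      x.val n = 0 := by
  rw [← Submodule.restrictScalars_mem A, Jhat, ← Ideal.map_pow, Ideal.smul_restrictScalars,
    Submodule.restrictScalars_top, pow_smul_top_eq_ker_eval hJ, LinearMap.mem_ker, eval_apply]

theorem mem_subCompletion_inf_pow_smul_top_iff {N : Submodule A M} {n : ℕ}
    {x : AdicCompletion J M} :
    x ∈ subCompletion J (N ⊓ J ^ n • ⊤) ↔ x ∈ subCompletion J N ∧ x.val n = 0 := by
  constructor
  · intro hx
    refine ⟨fun k => Submodule.map_mono inf_le_left (hx k), ?_⟩
    obtain ⟨y, ⟨-, hy⟩, hyx⟩ := hx n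
    rw [← hyx, Submodule.mkQ_apply, Submodule.Quotient.mk_eq_zero]
    exact hy
  · rintro ⟨hx, hxn⟩ k
    rcases le_total k n with hkn | hnk
    · rw [← transitionMap_comp_eval_apply J M hkn, hxn, _root_.map_zero]
      exact Submodule.zero_mem _
    · obtain ⟨y, hyN, hyx⟩ := hx k
      have hy : y ∈ (J ^ n • ⊤ : Submodule A M) := by
        rw [← Submodule.Quotient.mk_eq_zero, ← hxn, ← transitionMap_comp_eval_apply J M hnk,
          ← hyx]
        rfl
      exact ⟨y, ⟨hyN, hy⟩, hyx⟩

end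

/-- Generalized Artin–Rees lemma: if `J` is finitely generated and the completion `Â`
is Noetherian, then for a finitely generated module `M` and a submodule `M' ⊆ M`, the
filtrations `(Ĵ^n • M̂')` and `((M' ∩ J^n M)^)` define the same topology on `M̂'`,
i.e. they are mutually cofinal. -/
theorem generalized_artinRees_topologies
    (hJ : J.FG) (hNoeth : IsNoetherianRing (AdicCompletion J A))
    [Module.Finite A M] (M' : Submodule A M) :
    (∀ n : ℕ, ∃ m : ℕ,
        (Jhat J) ^ m • subCompletion J M' ≤ subCompletion J (M' ⊓ (J ^ n • ⊤))) ∧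
    (∀ n : ℕ, ∃ m : ℕ,
        subCompletion J (M' ⊓ (J ^ m • ⊤)) ≤ (Jhat J) ^ n • subCompletion J M') := by
  have : Module.Finite (AdicCompletion J A) (AdicCompletion J M) :=
    .of_surjective _ (ofTensorProduct_surjective_of_finite J M)
  refine ⟨fun n => ⟨n, fun x hx => ?_⟩, fun n => ?_⟩
  · refine mem_subCompletion_inf_pow_smul_top_iff.mpr ⟨Submodule.smul_le_right hx, ?_⟩
    exact (mem_Jhat_pow_smul_top_iff hJ n).mp (Submodule.smul_mono le_rfl le_top hx)
  · obtain ⟨k, hk⟩ := Ideal.exists_pow_inf_eq_pow_smul (Jhat J) (subCompletion J M')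
    refine ⟨n + k, fun x hx => ?_⟩
    obtain ⟨hxM', hx0⟩ := mem_subCompletion_inf_pow_smul_top_iff.mp hx
    have hx' : x ∈ (Jhat J) ^ (n + k) • ⊤ ⊓ subCompletion J M' :=
      ⟨(mem_Jhat_pow_smul_top_iff hJ _).mpr hx0, hxM'⟩
    rw [hk _ le_add_self, Nat.add_sub_cancel] at hx'
    exact Submodule.smul_mono le_rfl inf_le_right hx'
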